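/- arXiv:math/9802046 — 3 statements merged into one kernel-verified Lean document; each statement's English description precedes it below -/
import Mathlib

section
/- For all positive integers m and n, h(m·n) ≥ h(m) + h(n) − 1. -/
/-- Number of digits of `n` in base `B`. -/
def dig (B n : ℕ) : ℕ := (Nat.digits B n).length

/-- Number of digits needed to write the prime power factorisation of `n` in base `B`. -/
def phi (B n : ℕ) : ℕ :=
  ∑ p ∈ n.factorization.support,
    (dig B p + if n.factorization p = 1 then 0 else dig B (n.factorization p))

/-- `h B n = δ(n) - φ(n)` as an integer. -/
def hEcon (B n : ℕ) : ℤ := (dig B n : ℤ) - (phi B n : ℤ)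

/-!
Both halves of `h = δ - φ` behave well under multiplication: `δ(mn) ≥ δ(m) + δ(n) - 1`, and `φ`
is subadditive. Indeed `φ(n) = ∑_p c_p(v_p(n))` with `c_p(0) = 0` and `c_p(a) = δ(p) + δ'(a)`
otherwise, and `c_p` is subadditive because adding two exponents costs at most one extra digit,
which is paid for by the at least one digit of `p`.
-/

lemma dig_le_iff {B k : ℕ} (hB : 2 ≤ B) (n : ℕ) : dig B n ≤ k ↔ n < B ^ k :=
  Nat.digits_length_le_iff hB n

lemma lt_dig_iff {B k : ℕ} (hB : 2 ≤ B) (n : ℕ) : k < dig B n ↔ B ^ k ≤ n :=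
  Nat.lt_digits_length_iff hB n

lemma dig_mono (B : ℕ) {a b : ℕ} (h : a ≤ b) : dig B a ≤ dig B b :=
  Nat.le_length_digits_le B a b h

lemma dig_pos {B n : ℕ} (hB : 2 ≤ B) (hn : n ≠ 0) : 0 < dig B n :=
  (lt_dig_iff hB n).2 (by simpa using Nat.one_le_iff_ne_zero.2 hn)

lemma dig_add_dig_le_dig_mul_add_one {B m n : ℕ} (hB : 2 ≤ B) (hm : m ≠ 0) (hn : n ≠ 0) :
    dig B m + dig B n ≤ dig B (m * n) + 1 := by
  have hm' : B ^ (dig B m - 1) ≤ m := (lt_dig_iff hB m).1 (by have := dig_pos hB hm; omega)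
  have hn' : B ^ (dig B n - 1) ≤ n := (lt_dig_iff hB n).1 (by have := dig_pos hB hn; omega)
  have : dig B m - 1 + (dig B n - 1) < dig B (m * n) :=
    (lt_dig_iff hB _).2 (pow_add B _ _ ▸ Nat.mul_le_mul hm' hn')
  omega

lemma dig_add_le_dig_add_one {B a b : ℕ} (hB : 2 ≤ B) (hab : a ≤ b) :
    dig B (a + b) ≤ dig B b + 1 := by
  refine (dig_le_iff hB _).2 ?_
  have hb : b < B ^ dig B b := (dig_le_iff hB b).1 le_rfl
  calc a + b < 2 * B ^ dig B b := by omega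
    _ ≤ B * B ^ dig B b := Nat.mul_le_mul_right _ hB
    _ = B ^ (dig B b + 1) := (pow_succ' B _).symm

/-- The paper's `δ'`: an exponent `1` is not written. -/
def dig' (B a : ℕ) : ℕ := if a = 1 then 0 else dig B a

lemma dig_add_le_dig_add_dig' {B p a b : ℕ} (hB : 2 ≤ B) (hp : 2 ≤ p) (ha : 1 ≤ a)
    (hab : a ≤ b) : dig B (a + b) ≤ dig B p + (dig' B a + dig' B b) := by
  rcases Nat.lt_or_ge b 2 with hb | hb
  · obtain rfl : a = 1 := by omega
    obtain rfl : b = 1 := by omega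
    simpa [dig'] using dig_mono B hp
  · have := dig_add_le_dig_add_one hB hab
    have := dig_pos hB (show p ≠ 0 by omega)
    simp only [dig', show b ≠ 1 by omega, if_false]
    omega

def primePowerCost (B p a : ℕ) : ℕ := if a = 0 then 0 else dig B p + dig' B a

lemma primePowerCost_add_le {B p : ℕ} (hB : 2 ≤ B) (hp : 2 ≤ p) (a b : ℕ) :
    primePowerCost B p (a + b) ≤ primePowerCost B p a + primePowerCost B p b := by
  rcases Nat.eq_zero_or_pos a with rfl | ha
  · simp
  rcases Nat.eq_zero_or_pos b with rfl | hb
  · simp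
  have hab : dig' B (a + b) = dig B (a + b) := if_neg (by omega)
  simp only [primePowerCost, show a + b ≠ 0 by omega, show a ≠ 0 by omega,
    show b ≠ 0 by omega, if_false, hab]
  rcases le_total a b with hle | hle
  · have := dig_add_le_dig_add_dig' hB hp ha hle
    omega
  · have := dig_add_le_dig_add_dig' hB hp hb hle
    rw [add_comm a b]
    omega

lemma phi_eq_sum_primePowerCost (B n : ℕ) {U : Finset ℕ} (hU : n.primeFactors ⊆ U) :
    phi B n = ∑ p ∈ U, primePowerCost B p (n.factorization p) := by
  rw [phi, Nat.support_factorization]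
  refine Finset.sum_subset_zero_on_sdiff hU (fun p hp => ?_) (fun p hp => ?_)
  · simp [primePowerCost, (Finsupp.notMem_support_iff (f := n.factorization)).1 (Finset.mem_sdiff.1 hp).2]
  · simp [primePowerCost, dig', (Finsupp.mem_support_iff (f := n.factorization)).1 hp]

lemma phi_mul_le {B m n : ℕ} (hB : 2 ≤ B) (hm : m ≠ 0) (hn : n ≠ 0) :
    phi B (m * n) ≤ phi B m + phi B n := by
  have hmn : m * n ≠ 0 := mul_ne_zero hm hn
  rw [phi_eq_sum_primePowerCost B (m * n) le_rfl,
    phi_eq_sum_primePowerCost B m (Nat.primeFactors_mono (dvd_mul_right m n) hmn),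
    phi_eq_sum_primePowerCost B n (Nat.primeFactors_mono (dvd_mul_left n m) hmn),
    ← Finset.sum_add_distrib]
  refine Finset.sum_le_sum fun p hp => ?_
  rw [Nat.factorization_mul hm hn, Finsupp.add_apply]
  exact primePowerCost_add_le hB (Nat.prime_of_mem_primeFactors hp).two_le _ _

theorem statement_7 (B : ℕ) (hB : 2 ≤ B) (m n : ℕ) (hm : 0 < m) (hn : 0 < n) :
    hEcon B m + hEcon B n - 1 ≤ hEcon B (m * n) := by
  have hdig := dig_add_dig_le_dig_mul_add_one hB hm.ne' hn.ne'
  have hphi := phi_mul_le hB hm.ne' hn.ne'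
  simp only [hEcon]
  omega
end

section
/- Let r ≥ 2 be an integer and let k ≥ 0. Then there are infinitely many positive integers n such that h(n) ≥ k, r divides n, and every prime factor of n is a prime factor of r. -/
/-!
Take `n = r ^ B ^ (M + 1)`. Since `r ^ B ≥ 2 ^ B > B`, `n ≥ B ^ B ^ M`, so `n` has more than
`B ^ M` digits. On the other hand `n` has the same prime factors as `r`, each written with at
most `δ(r)` digits, and every exponent is at most `r · B ^ (M + 1)`, which has at most
`δ(r) + M + 2` digits. Thus `φ(n)` grows only linearly in `M` while `δ(n)` grows exponentially.
-/

open Filter Topology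

lemma dig_mono_s11 (B : ℕ) : Monotone (dig B) := Nat.le_length_digits_le B

lemma dig_mul_le {B : ℕ} (hB : 1 < B) (a b : ℕ) : dig B (a * b) ≤ dig B a + dig B b := by
  rw [dig, Nat.digits_length_le_iff hB, pow_add]
  exact Nat.mul_lt_mul'' ((Nat.digits_length_le_iff hB a).1 le_rfl)
    ((Nat.digits_length_le_iff hB b).1 le_rfl)

lemma dig_base_pow {B : ℕ} (hB : 1 < B) (m : ℕ) : dig B (B ^ m) = m + 1 := by
  rw [dig, Nat.length_digits B _ hB (by positivity), Nat.log_pow hB]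

lemma lt_dig_of_base_pow_le {B m n : ℕ} (hB : 1 < B) (h : B ^ m ≤ n) : m < dig B n :=
  (Nat.lt_digits_length_iff hB n).2 h

lemma phi_pow_le {B r : ℕ} (hB : 1 < B) (hr : r ≠ 0) (e : ℕ) :
    phi B (r ^ e) ≤ r.primeFactors.card * (2 * dig B r + dig B e) := by
  rcases eq_or_ne e 0 with rfl | he
  · simp [phi]
  rw [phi, Nat.support_factorization, Nat.primeFactors_pow r he, ← smul_eq_mul]
  refine Finset.sum_le_card_nsmul _ _ _ fun p hp => ?_
  have hprime : dig B p ≤ dig B r := dig_mono_s11 B (Nat.le_of_mem_primeFactors hp)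
  have hexp : dig B ((r ^ e).factorization p) ≤ dig B e + dig B r :=
    calc dig B ((r ^ e).factorization p) = dig B (e * r.factorization p) := by
          simp [Nat.factorization_pow]
      _ ≤ dig B (e * r) := dig_mono_s11 B (Nat.mul_le_mul_left e (Nat.factorization_lt p hr).le)
      _ ≤ dig B e + dig B r := dig_mul_le hB e r
  split_ifs <;> omega

lemma pow_le_pow_mul_of_two_le {r : ℕ} (hr : 2 ≤ r) (B m : ℕ) : B ^ m ≤ r ^ (B * m) :=
  calc B ^ m ≤ (2 ^ B) ^ m := Nat.pow_le_pow_left B.lt_two_pow_self.le m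
    _ ≤ (r ^ B) ^ m := Nat.pow_le_pow_left (Nat.pow_le_pow_left hr B) m
    _ = r ^ (B * m) := (pow_mul r B m).symm

lemma eventually_add_mul_le_pow (C D : ℕ) {B : ℕ} (hB : 1 < B) :
    ∀ᶠ M in atTop, C + D * M ≤ B ^ M := by
  have hB' : (1 : ℝ) < B := by exact_mod_cast hB
  have hlim : Tendsto (fun M : ℕ => ((C + D * M : ℕ) : ℝ) / (B : ℝ) ^ M) atTop (𝓝 0) := by
    have hC := tendsto_const_nhds (x := (C : ℝ)).div_atTop (tendsto_pow_atTop_atTop_of_one_lt hB')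
    have hD := (tendsto_pow_const_div_const_pow_of_one_lt 1 hB').const_mul (D : ℝ)
    simpa [add_div, mul_div_assoc] using hC.add hD
  filter_upwards [hlim.eventually (gt_mem_nhds one_pos)] with M hM
  exact_mod_cast ((div_lt_one (by positivity)).1 hM).le

theorem statement_11 (B : ℕ) (hB : 2 ≤ B) (r : ℕ) (hr : 2 ≤ r) (k : ℕ) :
    {n : ℕ | 0 < n ∧ (k : ℤ) ≤ hEcon B n ∧ r ∣ n ∧
      ∀ p : ℕ, p.Prime → p ∣ n → p ∣ r}.Infinite := by
  have hB1 : 1 < B := hB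
  set ω := r.primeFactors.card
  have hmono : StrictMono fun M : ℕ => r ^ B ^ (M + 1) := fun a b hab =>
    Nat.pow_lt_pow_right hr (Nat.pow_lt_pow_right hB1 (by omega))
  refine Nat.frequently_atTop_iff_infinite.1 (hmono.tendsto_atTop.frequently (Eventually.frequently ?_))
  filter_upwards [eventually_add_mul_le_pow (k + ω * (2 * dig B r + 2)) ω hB1] with M hM
  have hdig : B ^ M < dig B (r ^ B ^ (M + 1)) :=
    lt_dig_of_base_pow_le hB1 (pow_succ' B M ▸ pow_le_pow_mul_of_two_le hr B _)
  have hphi : phi B (r ^ B ^ (M + 1)) ≤ ω * (2 * dig B r + 2) + ω * M := by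
    have := phi_pow_le hB1 (by omega : r ≠ 0) (B ^ (M + 1))
    rw [dig_base_pow hB1] at this
    linarith
  refine ⟨by positivity, ?_, dvd_pow_self r (by positivity), fun p hp hpn => hp.dvd_of_dvd_pow hpn⟩
  unfold hEcon
  omega
end

section
/- Assume Dickson's conjecture: for every finite family of linear forms f_i(x) = a_i·x + b_i (i = 1,…,t) with positive integer coefficients a_i and nonnegative integer constants b_i, if there is no integer m > 1 dividing the product f_1(n)·f_2(n)⋯f_t(n) for every natural number n, then there are infinitely many natural numbers n for which all the values f_1(n), …, f_t(n) are simultaneously prime. Then for every base B ≥ 2, every k ≥ 0, and every t ≥ 1, there exists a positive integer N such that all of N, N+1, …, N+t−1 are k-frugal (h(N+j) ≥ k for 0 ≤ j ≤ t−1). -/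
/-!
Take distinct primes `q j > max t B` and a huge exponent `e`. By the Chinese remainder theorem
choose `c ≡ 1 [MOD t! * t!]` with `c + j ≡ q j ^ e [MOD q j ^ (e + 1)]`; then
`c + j = (j + 1) * q j ^ e * b j` with `b j` coprime to `W = t! * t! * ∏ i, q i ^ (e + 1)`.
The linear forms `(W / ((j + 1) * q j ^ e)) * x + b j` have no fixed prime divisor: a prime
dividing `W` misses their values at `x = 0`, and any other prime exceeds `t`, so it cannot vanish
on all `t` forms at once. Dickson's conjecture makes them simultaneously prime, equal to `p j > W`
say, and then `N + j = (j + 1) * q j ^ e * p j` for `N = c + W * x`. Since `q j ≥ B`, `N + j` has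
at least `e + δ(p j)` digits, whereas its factorisation costs only
`φ(j + 1) + δ(q j) + δ(e) + δ(p j)`; `e` is chosen so large that the difference exceeds `k`.
-/

open Finset
open scoped Nat

def DicksonConjecture : Prop :=
  ∀ (t : ℕ) (a b : Fin t → ℕ), (∀ i, 0 < a i) →
    (¬ ∃ m : ℕ, 1 < m ∧ ∀ n : ℕ, m ∣ ∏ i, (a i * n + b i)) →
    {n : ℕ | ∀ i, Nat.Prime (a i * n + b i)}.Infinite

section Economy

variable {B : ℕ}

lemma dig_base_pow_mul (hB : 2 ≤ B) (e : ℕ) {n : ℕ} (hn : 0 < n) :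
    dig B (B ^ e * n) = e + dig B n := by
  rw [dig, dig, Nat.digits_base_pow_mul (by omega) hn, List.length_append,
    List.length_replicate]

lemma exists_add_dig_le (hB : 2 ≤ B) (K : ℕ) : ∃ e, 2 ≤ e ∧ K + dig B e ≤ e := by
  have hdig : dig B (B ^ (K + 1)) = K + 2 := by
    simpa [dig, Nat.digits_of_lt B 1 one_ne_zero (by omega)] using
      dig_base_pow_mul hB (K + 1) one_pos
  have h2 : 2 ^ (K + 1) ≤ B ^ (K + 1) := Nat.pow_le_pow_left hB _
  have hK : K < 2 ^ K := Nat.lt_two_pow_self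
  rw [pow_succ] at h2
  exact ⟨B ^ (K + 1), by omega, by omega⟩

lemma phi_eq_sum (n : ℕ) :
    phi B n = n.factorization.sum fun p k => dig B p + if k = 1 then 0 else dig B k :=
  rfl

lemma phi_mul_of_coprime {a b : ℕ} (ha : a ≠ 0) (hb : b ≠ 0) (hab : a.Coprime b) :
    phi B (a * b) = phi B a + phi B b := by
  have hdisj : Disjoint a.factorization.support b.factorization.support := by
    simpa only [Nat.support_factorization] using hab.disjoint_primeFactors
  rw [phi_eq_sum, phi_eq_sum, phi_eq_sum, Nat.factorization_mul ha hb,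
    Finsupp.sum_add_index_of_disjoint hdisj]

lemma phi_prime_pow {p e : ℕ} (hp : p.Prime) (he : e ≠ 0) :
    phi B (p ^ e) = dig B p + if e = 1 then 0 else dig B e := by
  rw [phi, hp.factorization_pow, Finsupp.support_single _ he, sum_singleton,
    Finsupp.single_eq_same]

lemma le_hEcon_mul_pow_mul (hB : 2 ≤ B) {m q e p : ℕ} (hm : 0 < m) (hq : q.Prime)
    (hBq : B ≤ q) (hqm : ¬ q ∣ m) (he : 2 ≤ e) (hp : p.Prime) (hp_gt : m * q ^ e < p) :
    (e : ℤ) - (phi B m + dig B q + dig B e) ≤ hEcon B (m * q ^ e * p) := by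
  have hdig : e + dig B p ≤ dig B (m * q ^ e * p) := by
    rw [← dig_base_pow_mul hB e hp.pos]
    refine Nat.le_length_digits_le _ _ _ (Nat.mul_le_mul ?_ le_rfl)
    exact (Nat.pow_le_pow_left hBq e).trans (Nat.le_mul_of_pos_left _ hm)
  have hmq : 0 < m * q ^ e := Nat.mul_pos hm (pow_pos hq.pos e)
  have hcop_p : (m * q ^ e).Coprime p :=
    (hp.coprime_iff_not_dvd.2 fun h => (Nat.le_of_dvd hmq h).not_gt hp_gt).symm
  have hcop_q : m.Coprime (q ^ e) := ((hq.coprime_iff_not_dvd.2 hqm).pow_left e).symm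
  have hphi : phi B (m * q ^ e * p) = phi B m + (dig B q + dig B e) + dig B p := by
    rw [phi_mul_of_coprime hmq.ne' hp.ne_zero hcop_p,
      phi_mul_of_coprime hm.ne' (pow_ne_zero _ hq.ne_zero) hcop_q, phi_prime_pow hq (by omega),
      ← pow_one p, phi_prime_pow hp one_ne_zero, pow_one, if_neg (by omega), if_pos rfl,
      add_zero]
  rw [hEcon, hphi]
  push_cast
  omega

end Economy

lemma exists_not_dvd_prod_of_card_lt {ι : Type*} [Fintype ι] {r : ℕ} (hr : r.Prime)
    (hcard : Fintype.card ι < r) (a b : ι → ℕ) (ha : ∀ i, ¬ r ∣ a i) :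
    ∃ n, ¬ r ∣ ∏ i, (a i * n + b i) := by
  have := Fact.mk hr
  obtain ⟨y, hy⟩ : ∃ y : ZMod r, ∀ i, y ≠ -(b i : ZMod r) / a i := by
    by_contra! h
    have := Fintype.card_le_of_surjective _ fun y => (h y).imp fun _ hi => hi.symm
    rw [ZMod.card] at this
    omega
  refine ⟨y.val, fun hdvd => ?_⟩
  obtain ⟨i, -, hi⟩ := (Prime.dvd_finsetProd_iff hr.prime _).mp hdvd
  have hai : (a i : ZMod r) ≠ 0 := by rw [Ne, ZMod.natCast_eq_zero_iff]; exact ha i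
  rw [← ZMod.natCast_eq_zero_iff] at hi
  push_cast [ZMod.natCast_val, ZMod.cast_id] at hi
  apply hy i
  field_simp
  linear_combination hi

lemma not_exists_fixed_divisor {t W : ℕ} (a b : Fin t → ℕ) (haW : ∀ i, a i ∣ W)
    (hbW : ∀ i, (b i).Coprime W) (hsmall : ∀ r, r.Prime → r ≤ t → r ∣ W) :
    ¬ ∃ m, 1 < m ∧ ∀ n, m ∣ ∏ i, (a i * n + b i) := by
  rintro ⟨m, hm, hdvd⟩
  have hr : m.minFac.Prime := Nat.minFac_prime (by omega)
  have hr_dvd : ∀ n, m.minFac ∣ ∏ i, (a i * n + b i) := fun n =>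
    (Nat.minFac_dvd m).trans (hdvd n)
  by_cases hrW : m.minFac ∣ W
  · have h0 := hr_dvd 0
    simp only [mul_zero, zero_add] at h0
    have hprod : (∏ i, b i).Coprime W := Nat.Coprime.prod_left fun i _ => hbW i
    exact hr.coprime_iff_not_dvd.1 (hprod.coprime_dvd_left h0) hrW
  · have hcard : Fintype.card (Fin t) < m.minFac := by
      rw [Fintype.card_fin]
      by_contra h
      exact hrW (hsmall _ hr (by omega))
    obtain ⟨n, hn⟩ :=
      exists_not_dvd_prod_of_card_lt hr hcard a b fun i h => hrW (h.trans (haW i))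
    exact hn (hr_dvd n)

lemma exists_add_eq_mul_prime (hD : DicksonConjecture) {t W c : ℕ} (g : ℕ → ℕ)
    (hW : W ≠ 0) (hgc : ∀ j < t, g j ∣ c + j) (hgW : ∀ j < t, g j ∣ W)
    (hcop : ∀ j < t, ((c + j) / g j).Coprime W)
    (hsmall : ∀ r, r.Prime → r ≤ t → r ∣ W) :
    ∃ N, 0 < N ∧ ∀ j < t, ∃ p, p.Prime ∧ W < p ∧ N + j = g j * p := by
  set a : Fin t → ℕ := fun i => W / g i
  set b : Fin t → ℕ := fun i => (c + i) / g i
  have ha : ∀ i, 0 < a i := fun i =>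
    Nat.div_pos (Nat.le_of_dvd (Nat.pos_of_ne_zero hW) (hgW i i.2))
      (Nat.pos_of_dvd_of_pos (hgW i i.2) (Nat.pos_of_ne_zero hW))
  have hprimes := hD t a b ha <| not_exists_fixed_divisor a b
    (fun i => Nat.div_dvd_of_dvd (hgW i i.2)) (fun i => hcop i i.2) hsmall
  obtain ⟨x, hx, hWx⟩ := hprimes.exists_gt W
  refine ⟨c + W * x, Nat.add_pos_right _ (Nat.mul_pos (Nat.pos_of_ne_zero hW) (by omega)),
    fun j hj => ⟨a ⟨j, hj⟩ * x + b ⟨j, hj⟩, hx ⟨j, hj⟩, ?_, ?_⟩⟩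
  · nlinarith [ha ⟨j, hj⟩]
  · simp only [a, b]
    rw [mul_add, ← mul_assoc, Nat.mul_div_cancel' (hgW j hj), Nat.mul_div_cancel' (hgc j hj)]
    ring

lemma exists_injective_primes_gt (M : ℕ) :
    ∃ q : ℕ → ℕ, q.Injective ∧ ∀ j, (q j).Prime ∧ M < q j := by
  refine ⟨fun j => Nat.nth Nat.Prime (j + M), fun i j h => ?_,
    fun j => ⟨Nat.prime_nth_prime _, ?_⟩⟩
  · simpa using (Nat.nth_strictMono Nat.infinite_setOfPred_prime).injective h
  · have := Nat.add_two_le_nth_prime (j + M)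
    dsimp only
    omega

section Construction

variable {t e c : ℕ} {q : ℕ → ℕ}

lemma exists_modEq_one_and_add_modEq_pow (hq : ∀ j, (q j).Prime ∧ t < q j) (hinj : q.Injective)
    (he : e ≠ 0) :
    ∃ c, c ≡ 1 [MOD t ! * t !] ∧ ∀ j < t, c + j ≡ q j ^ e [MOD q j ^ (e + 1)] := by
  have hpair : Set.Pairwise (range t : Set ℕ) (Nat.Coprime.onFun fun j => q j ^ (e + 1)) :=
    fun i _ j _ hij => ((Nat.coprime_primes (hq i).1 (hq j).1).2 (hinj.ne hij)).pow _ _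
  obtain ⟨c₁, hc₁⟩ := Nat.chineseRemainderOfFinset (fun j => q j ^ e - j)
    (fun j => q j ^ (e + 1)) (range t) (fun j _ => pow_ne_zero _ (hq j).1.ne_zero) hpair
  have hcop : (∏ j ∈ range t, q j ^ (e + 1)).Coprime (t ! * t !) := by
    refine Nat.Coprime.prod_left fun j _ => Nat.Coprime.pow_left _ ?_
    have h : (q j).Coprime t ! := (hq j).1.coprime_iff_not_dvd.2 fun h =>
      ((hq j).1.dvd_factorial.1 h).not_gt (hq j).2
    exact h.mul_right h
  obtain ⟨c, hcq, hc1⟩ := Nat.chineseRemainder hcop c₁ 1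
  refine ⟨c, hc1, fun j hj => ?_⟩
  have hjq : j ≤ q j ^ e := (hj.trans (hq j).2).le.trans (Nat.le_self_pow he _)
  have hc := (hcq.of_dvd (dvd_prod_of_mem _ (mem_range.2 hj))).trans (hc₁ j (mem_range.2 hj))
  simpa only [Nat.sub_add_cancel hjq] using hc.add_right j

lemma succ_mul_pow_dvd_add (hq : ∀ j, (q j).Prime ∧ t < q j) (hc1 : c ≡ 1 [MOD t ! * t !])
    (hcq : ∀ j < t, c + j ≡ q j ^ e [MOD q j ^ (e + 1)]) {j : ℕ} (hj : j < t) :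
    (j + 1) * q j ^ e ∣ c + j := by
  have hqj : ¬ q j ∣ j + 1 := Nat.not_dvd_of_pos_of_lt j.succ_pos (by linarith [(hq j).2])
  have hcop : (j + 1).Coprime (q j ^ e) :=
    (((hq j).1.coprime_iff_not_dvd.2 hqj).pow_left e).symm
  refine hcop.mul_dvd_of_dvd_of_dvd ?_ ?_
  · have hF : j + 1 ∣ t ! * t ! := (Nat.dvd_factorial j.succ_pos hj).mul_right _
    rw [(hc1.add_right j).dvd_iff hF, add_comm]
  · exact ((hcq j hj).dvd_iff (pow_dvd_pow _ e.le_succ)).2 dvd_rfl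

lemma coprime_div_succ_mul_pow (hq : ∀ j, (q j).Prime ∧ t < q j) (he : e ≠ 0)
    (hc1 : c ≡ 1 [MOD t ! * t !]) (hcq : ∀ j < t, c + j ≡ q j ^ e [MOD q j ^ (e + 1)])
    {j : ℕ} (hj : j < t) :
    ((c + j) / ((j + 1) * q j ^ e)).Coprime (t ! * t ! * ∏ i ∈ range t, q i ^ (e + 1)) := by
  obtain ⟨b, hb⟩ := succ_mul_pow_dvd_add hq hc1 hcq hj
  rw [hb, Nat.mul_div_cancel_left _ (Nat.mul_pos j.succ_pos (pow_pos (hq j).1.pos e))]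
  have hsmall : b.Coprime t ! := Nat.coprime_of_dvd fun r hr hrb hrF => by
    have hdvd : (j + 1) * r ∣ 1 + j := by
      rw [← (hc1.add_right j).dvd_iff (mul_dvd_mul (Nat.dvd_factorial j.succ_pos hj) hrF), hb,
        mul_assoc]
      exact mul_dvd_mul_left _ (hrb.mul_left _)
    nlinarith [Nat.le_of_dvd (by omega) hdvd, hr.two_le]
  have hself : ¬ q j ∣ b := fun h => by
    have hdvd : q j ^ (e + 1) ∣ q j ^ e := by
      rw [← (hcq j hj).dvd_iff dvd_rfl, hb, pow_succ, mul_comm (j + 1), mul_assoc]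
      exact mul_dvd_mul_left _ (h.mul_left _)
    exact ((Nat.pow_dvd_pow_iff_le_right (hq j).1.one_lt).1 hdvd).not_gt e.lt_succ_self
  -- `q i` divides both `c + i` and `c + j`, which differ by less than `q i`.
  have hother : ∀ i < t, i ≠ j → ¬ q i ∣ b := fun i hi hij h => by
    have hj' : q i ∣ c + j := hb ▸ h.mul_left _
    have hi' : q i ∣ c + i :=
      ((hcq i hi).dvd_iff (dvd_pow_self _ e.succ_ne_zero)).2 (dvd_pow_self _ he)
    have hji : j ≡ i [MOD q i] :=
      ((Nat.modEq_zero_iff_dvd.2 hj').trans (Nat.modEq_zero_iff_dvd.2 hi').symm).add_left_cancel' c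
    exact hij (hji.eq_of_lt_of_lt (hj.trans (hq i).2) (hi.trans (hq i).2)).symm
  refine (hsmall.mul_right hsmall).mul_right (Nat.Coprime.prod_right fun i hi => ?_)
  refine Nat.Coprime.pow_right _ ((hq i).1.coprime_iff_not_dvd.2 ?_).symm
  obtain rfl | hij := eq_or_ne i j
  · exact hself
  · exact hother i (mem_range.1 hi) hij

end Construction

theorem statement_15_general
    (HDickson : ∀ (t : ℕ) (a b : Fin t → ℕ), (∀ i, 0 < a i) →
      (¬ ∃ m : ℕ, 1 < m ∧ ∀ n : ℕ, m ∣ ∏ i, (a i * n + b i)) →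
      {n : ℕ | ∀ i, Nat.Prime (a i * n + b i)}.Infinite)
    (B : ℕ) (hB : 2 ≤ B) (k : ℕ) (t : ℕ) :
    ∃ N : ℕ, 0 < N ∧ ∀ j < t, (k : ℤ) ≤ hEcon B (N + j) := by
  obtain ⟨q, hq_inj, hq⟩ := exists_injective_primes_gt (max t B)
  have hqt : ∀ j, (q j).Prime ∧ t < q j := fun j =>
    ⟨(hq j).1, (le_max_left _ _).trans_lt (hq j).2⟩
  set C := (range t).sup fun j => phi B (j + 1) + dig B (q j)
  obtain ⟨e, he, hCe⟩ := exists_add_dig_le hB (k + C)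
  obtain ⟨c, hc1, hcq⟩ := exists_modEq_one_and_add_modEq_pow hqt hq_inj (by omega : e ≠ 0)
  set W := t ! * t ! * ∏ i ∈ range t, q i ^ (e + 1)
  have hW : W ≠ 0 :=
    mul_ne_zero (by positivity) (prod_ne_zero_iff.2 fun i _ => pow_ne_zero _ (hq i).1.ne_zero)
  have hgW : ∀ j < t, (j + 1) * q j ^ e ∣ W := fun j hj =>
    mul_dvd_mul ((Nat.dvd_factorial j.succ_pos hj).mul_right _)
      ((pow_dvd_pow _ e.le_succ).trans (dvd_prod_of_mem _ (mem_range.2 hj)))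
  obtain ⟨N, hN, hNp⟩ := exists_add_eq_mul_prime HDickson (fun j => (j + 1) * q j ^ e) hW
    (fun j hj => succ_mul_pow_dvd_add hqt hc1 hcq hj) hgW
    (fun j hj => coprime_div_succ_mul_pow hqt (by omega) hc1 hcq hj)
    (fun r hr hrt => ((hr.dvd_factorial.2 hrt).mul_right _).mul_right _)
  refine ⟨N, hN, fun j hj => ?_⟩
  obtain ⟨p, hp, hWp, hNj⟩ := hNp j hj
  have hC : phi B (j + 1) + dig B (q j) ≤ C :=
    le_sup (f := fun j => phi B (j + 1) + dig B (q j)) (mem_range.2 hj)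
  have hqj : ¬ q j ∣ j + 1 := Nat.not_dvd_of_pos_of_lt j.succ_pos (by linarith [(hqt j).2])
  have := le_hEcon_mul_pow_mul hB j.add_one_pos (hq j).1 (le_of_max_le_right (hq j).2.le) hqj
    he hp ((Nat.le_of_dvd (Nat.pos_of_ne_zero hW) (hgW j hj)).trans_lt hWp)
  rw [hNj]
  omega

theorem statement_15
    (HDickson : ∀ (t : ℕ) (a b : Fin t → ℕ), (∀ i, 0 < a i) →
      (¬ ∃ m : ℕ, 1 < m ∧ ∀ n : ℕ, m ∣ ∏ i, (a i * n + b i)) →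
      {n : ℕ | ∀ i, Nat.Prime (a i * n + b i)}.Infinite)
    (B : ℕ) (hB : 2 ≤ B) (k : ℕ) (t : ℕ) (ht : 1 ≤ t) :
    ∃ N : ℕ, 0 < N ∧ ∀ j < t, (k : ℤ) ≤ hEcon B (N + j) :=
  statement_15_general HDickson B hB k t
end
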